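/- Fix reals α, β > −1 and integers n, k, m, j with 0 ≤ k ≤ n and 0 ≤ j ≤ m. Then ∬_{x>0, −x<y<x} P^{(α,β)}_{n,k}(x,y) · P^{(α,β)}_{m,j}(x,y) · x^{α−β} e^{−x} (x−y)^β dx dy equals s_{n,k}^{(α,β)} if n = m and k = j, and equals 0 otherwise, where s_{n,k}^{(α,β)} = 2^{β+1} Γ(α+n+k+2) / [(n−k)! (β+2k+1)]. -/

import Mathlib

open Finset MeasureTheory Real

/-- Pochhammer symbol `(a)_m = a (a+1) ⋯ (a+m-1)`. -/
noncomputable def poch (a : ℝ) (m : ℕ) : ℝ := ∏ i ∈ Finset.range m, (a + i)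

/-- Jacobi polynomial `P_n^{(α,β)}(x)`. -/
noncomputable def jacobiP (α β : ℝ) (n : ℕ) (x : ℝ) : ℝ :=
  ∑ i ∈ Finset.range (n + 1),
    poch (α + i + 1) (n - i) * poch (n + α + β + 1) i /
      ((Nat.factorial (n - i) : ℝ) * (Nat.factorial i : ℝ)) * ((x - 1) / 2) ^ i

/-- Generalized Laguerre polynomial `L_n^{(α)}(x)`. -/
noncomputable def laguerreL (α : ℝ) (n : ℕ) (x : ℝ) : ℝ :=
  ∑ i ∈ Finset.range (n + 1),
    poch (α + i + 1) (n - i) / ((Nat.factorial (n - i) : ℝ) * (Nat.factorial i : ℝ)) * (-x) ^ i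

/-- Laguerre–Jacobi Koornwinder polynomial
`P^{(α,β)}_{n,k}(x,y) = L^{(α+2k+1)}_{n-k}(x) · x^k · P^{(β,0)}_k(y/x)`. -/
noncomputable def ljP (α β : ℝ) (n k : ℕ) (x y : ℝ) : ℝ :=
  laguerreL (α + 2 * k + 1) (n - k) x * x ^ k * jacobiP β 0 k (y / x)

/-- Squared norm constant `s_{n,k}^{(α,β)}` of the Laguerre–Jacobi Koornwinder polynomials. -/
noncomputable def sconst (α β : ℝ) (n k : ℕ) : ℝ :=
  2 ^ (β + 1) * Real.Gamma (α + n + k + 2) / ((Nat.factorial (n - k) : ℝ) * (β + 2 * k + 1))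

/-!
Substituting `y = x t` maps `(0, ∞) × (-1, 1)` onto the domain with Jacobian `x`, and the
integrand splits into a Laguerre integrand in `x`, with weight `x ^ (α + k + j + 1) e^{-x}`, times a
Jacobi integrand in `t`, with weight `(1 - t) ^ β`. Orthogonality of the `P_k^{(β,0)}` settles
`k ≠ j`; for `k = j` the weight in `x` is the one of `L^{(α+2k+1)}`, and Laguerre orthogonality
gives the rest.

Both one-variable orthogonalities come from the vanishing of the moments against lower powers.
For Laguerre polynomials these moments are a Chu–Vandermonde sum; for Jacobi polynomials they are
a partial-fraction sum, evaluated by Lagrange interpolation at the nodes `0, -1, …, -k`.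
-/

open Set
open scoped Nat

lemma poch_add (a : ℝ) (m l : ℕ) : poch a (m + l) = poch a m * poch (a + m) l := by
  simp only [poch, prod_range_add, Nat.cast_add, add_assoc]

lemma poch_succ (a : ℝ) (m : ℕ) : poch a (m + 1) = poch a m * (a + m) := by
  simp [poch, prod_range_succ]

lemma poch_pos {a : ℝ} (ha : 0 < a) (m : ℕ) : 0 < poch a m :=
  prod_pos fun i _ => by positivity

lemma Gamma_add_nat_eq_poch_mul {s : ℝ} (hs : 0 < s) (m : ℕ) :
    Gamma (s + m) = poch s m * Gamma s := by
  induction m with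
  | zero => simp [poch]
  | succ m ih =>
    rw [Nat.cast_succ, ← add_assoc, Gamma_add_one (by positivity), ih, poch_succ]
    ring

lemma prod_range_natCast_sub_eq_descFactorial {R : Type*} [CommRing R] (p k : ℕ) :
    ∏ l ∈ range k, ((p : R) - l) = p.descFactorial k := by
  rw [← descPochhammer_eval_eq_prod_range, descPochhammer_eval_eq_descFactorial]

lemma Ring.choose_eq_prod_div {K : Type*} [Field K] [CharZero K] (r : K) (n : ℕ) :
    Ring.choose r n = (∏ i ∈ range n, (r - i)) / n ! := by
  rw [Ring.choose_eq_smul, ← Polynomial.aeval_eq_smeval, Polynomial.aeval_def,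
    ← Polynomial.eval_map, descPochhammer_map, descPochhammer_eval_eq_prod_range, smul_eq_mul,
    inv_mul_eq_div]

lemma poch_div_factorial (a : ℝ) (n : ℕ) : poch a n / n ! = Ring.choose (a + n - 1) n := by
  rw [Ring.choose_eq_prod_div, poch, ← prod_range_reflect]
  congr 1
  refine prod_congr rfl fun i hi => ?_
  rw [show n - 1 - i = n - (i + 1) by omega, Nat.cast_sub (by simp at hi; omega)]
  push_cast
  ring

lemma neg_one_pow_mul_poch_div_factorial (a : ℝ) (n : ℕ) :
    (-1) ^ n * poch a n / n ! = Ring.choose (-a) n := by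
  rw [Ring.choose_eq_prod_div, poch, ← card_range n, ← prod_const, card_range,
    ← prod_mul_distrib]
  congr 1
  exact prod_congr rfl fun i _ => by ring

lemma sum_range_choose_mul_choose {R : Type*} [CommRing R] [BinomialRing R] (r s : R) (m : ℕ) :
    ∑ i ∈ range (m + 1), Ring.choose r i * Ring.choose s (m - i) = Ring.choose (r + s) m := by
  rw [Ring.add_choose_eq m (Commute.all r s),
    Nat.sum_antidiagonal_eq_sum_range_succ (fun i j => Ring.choose r i * Ring.choose s j)]

lemma Ring.choose_natCast_sub_natCast_sub_one {R : Type*} [CommRing R] [BinomialRing R]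
    (m p : ℕ) : Ring.choose ((m : R) - p - 1) m = (-1) ^ m * p.choose m := by
  have h := Ring.choose_neg ((p : R) + 1 - m) m
  rw [show -((p : R) + 1 - m) = m - p - 1 by ring, show (p : R) + 1 - m + m - 1 = p by ring,
    Ring.choose_natCast] at h
  rw [h, Units.smul_def, Int.coe_negOnePow_natCast, zsmul_eq_mul, Int.cast_pow, Int.cast_neg,
    Int.cast_one]

lemma sum_poch_div_mul_neg_one_pow_mul_poch_eq_choose (a b : ℝ) (m : ℕ) :
    ∑ i ∈ range (m + 1), poch (a + i + 1) (m - i) / ((m - i)! * i !) * ((-1) ^ i * poch b i) =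
      Ring.choose (a + m - b) m := by
  rw [show a + m - b = -b + (a + m) by ring, ← sum_range_choose_mul_choose]
  refine sum_congr rfl fun i hi => ?_
  have hi : i ≤ m := by simpa [Nat.lt_succ_iff] using hi
  rw [← neg_one_pow_mul_poch_div_factorial,
    show a + m = a + i + 1 + (m - i : ℕ) - 1 by rw [Nat.cast_sub hi]; ring, ← poch_div_factorial]
  ring

section PolynomialMoments

variable {X : Type*} [MeasurableSpace X] {μ : Measure X} {u w : X → ℝ}

lemma integrable_sum_mul_pow_mul {g : X → ℝ}
    (hg : ∀ i, Integrable (fun x => g x * u x ^ i * w x) μ) (c : ℕ → ℝ) (n : ℕ) :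
    Integrable (fun x => (∑ i ∈ range (n + 1), c i * u x ^ i) * g x * w x) μ := by
  simp_rw [sum_mul]
  exact integrable_finsetSum _ fun i _ => ((hg i).const_mul (c i)).congr
    (ae_of_all _ fun x => by ring)

lemma integral_sum_mul_pow_mul {g : X → ℝ}
    (hg : ∀ i, Integrable (fun x => g x * u x ^ i * w x) μ) (c : ℕ → ℝ) (n : ℕ) :
    ∫ x, (∑ i ∈ range (n + 1), c i * u x ^ i) * g x * w x ∂μ =
      ∑ i ∈ range (n + 1), c i * ∫ x, g x * u x ^ i * w x ∂μ := by
  simp_rw [sum_mul]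
  rw [integral_finsetSum _ fun i _ => ((hg i).const_mul (c i)).congr
    (ae_of_all _ fun x => by ring)]
  refine sum_congr rfl fun i _ => ?_
  rw [← integral_const_mul]
  congr 1 with x
  ring

lemma integrable_pow_mul_pow_mul (huw : ∀ q, Integrable (fun x => u x ^ q * w x) μ) (p i : ℕ) :
    Integrable (fun x => u x ^ p * u x ^ i * w x) μ := by
  simpa only [← pow_add] using huw (p + i)

theorem integral_mul_eq_ite_of_moments (huw : ∀ q, Integrable (fun x => u x ^ q * w x) μ)
    (f : ℕ → X → ℝ) (c : ℕ → ℕ → ℝ) (hf : ∀ n x, f n x = ∑ i ∈ range (n + 1), c n i * u x ^ i)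
    (hmoment : ∀ m p, p < m → ∫ x, f m x * u x ^ p * w x ∂μ = 0) (n m : ℕ) :
    ∫ x, f n x * f m x * w x ∂μ = if n = m then c n n * ∫ x, f n x * u x ^ n * w x ∂μ else 0 := by
  have hint : ∀ m i, Integrable (fun x => f m x * u x ^ i * w x) μ := fun m i => by
    simp_rw [hf]
    exact integrable_sum_mul_pow_mul (integrable_pow_mul_pow_mul huw i) _ _
  have expand : ∀ n m, ∫ x, f n x * f m x * w x ∂μ =
      ∑ i ∈ range (n + 1), c n i * ∫ x, f m x * u x ^ i * w x ∂μ := fun n m => by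
    simp_rw [hf n]
    exact integral_sum_mul_pow_mul (hint m) _ _
  rcases lt_trichotomy n m with hnm | rfl | hmn
  · rw [if_neg hnm.ne, expand]
    exact sum_eq_zero fun i hi => by rw [hmoment m i (by simp at hi; omega), mul_zero]
  · rw [if_pos rfl, expand, sum_range_succ,
      sum_eq_zero fun i hi => by rw [hmoment n i (by simpa using hi), mul_zero], zero_add]
  · rw [if_neg hmn.ne', show (fun x => f n x * f m x * w x) = fun x => f m x * f n x * w x by
      ext x; ring, expand]
    exact sum_eq_zero fun i hi => by rw [hmoment n i (by simp at hi; omega), mul_zero]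

end PolynomialMoments

section Laguerre

variable {a : ℝ}

lemma neg_pow_mul_rpow_mul_exp {x : ℝ} (hx : 0 < x) (q : ℕ) :
    (-x) ^ q * (x ^ a * exp (-x)) = (-1) ^ q * (x ^ (a + q) * exp (-x)) := by
  rw [rpow_add hx, rpow_natCast, neg_pow]
  ring

lemma integrableOn_neg_pow_mul_rpow_mul_exp (ha : -1 < a) (q : ℕ) :
    IntegrableOn (fun x => (-x) ^ q * (x ^ a * exp (-x))) (Ioi 0) := by
  refine IntegrableOn.congr_fun ?_ (fun x hx => (neg_pow_mul_rpow_mul_exp hx q).symm)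
    measurableSet_Ioi
  have := GammaIntegral_convergent (s := a + q + 1) (by linarith [q.cast_nonneg (α := ℝ)])
  simp_rw [add_sub_cancel_right, mul_comm (exp _)] at this
  exact this.const_mul _

lemma integral_neg_pow_mul_rpow_mul_exp (ha : -1 < a) (q : ℕ) :
    ∫ x in Ioi 0, (-x) ^ q * (x ^ a * exp (-x)) = (-1) ^ q * Gamma (a + q + 1) := by
  rw [setIntegral_congr_fun measurableSet_Ioi (fun x hx => neg_pow_mul_rpow_mul_exp hx q),
    integral_const_mul, Gamma_eq_integral (by linarith [q.cast_nonneg (α := ℝ)])]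
  simp_rw [add_sub_cancel_right, mul_comm (exp _)]

lemma integral_laguerreL_mul_neg_pow (ha : -1 < a) (m p : ℕ) :
    ∫ x in Ioi 0, laguerreL a m x * (-x) ^ p * (x ^ a * exp (-x)) =
      (-1) ^ (m + p) * p.choose m * Gamma (a + p + 1) := by
  have hpos : 0 < a + p + 1 := by linarith [p.cast_nonneg (α := ℝ)]
  simp only [laguerreL]
  rw [integral_sum_mul_pow_mul (u := fun x => -x)
    (integrable_pow_mul_pow_mul (integrableOn_neg_pow_mul_rpow_mul_exp ha) p)]
  have hterm : ∀ i : ℕ, ∫ x in Ioi 0, (-x) ^ p * (-x) ^ i * (x ^ a * exp (-x)) =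
      (-1) ^ p * Gamma (a + p + 1) * ((-1) ^ i * poch (a + p + 1) i) := fun i => by
    simp_rw [← pow_add]
    rw [integral_neg_pow_mul_rpow_mul_exp ha, pow_add, Nat.cast_add,
      show a + (p + i : ℝ) + 1 = a + p + 1 + i by ring, Gamma_add_nat_eq_poch_mul hpos]
    ring
  simp_rw [hterm, mul_left_comm _ ((-1) ^ p * Gamma (a + p + 1)), ← mul_sum,
    sum_poch_div_mul_neg_one_pow_mul_poch_eq_choose,
    show a + m - (a + p + 1) = (m : ℝ) - p - 1 by ring, Ring.choose_natCast_sub_natCast_sub_one]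
  ring

theorem laguerreL_orthogonal (ha : -1 < a) (n m : ℕ) :
    ∫ x in Ioi 0, laguerreL a n x * laguerreL a m x * (x ^ a * exp (-x)) =
      if n = m then Gamma (a + n + 1) / n ! else 0 := by
  rw [integral_mul_eq_ite_of_moments (integrableOn_neg_pow_mul_rpow_mul_exp ha) (laguerreL a)
    _ (fun _ _ => rfl) fun m p hpm => by
      rw [integral_laguerreL_mul_neg_pow ha, Nat.choose_eq_zero_of_lt hpm]; simp]
  split_ifs
  · rw [integral_laguerreL_mul_neg_pow ha, Nat.choose_self, ← two_mul, pow_mul]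
    simp [poch, inv_mul_eq_div]
  · rfl

end Laguerre

lemma prod_erase_range_natCast_sub {R : Type*} [CommRing R] {k i : ℕ} (hi : i ≤ k) :
    ∏ j ∈ (range (k + 1)).erase i, ((j : R) - i) = (-1) ^ i * i ! * (k - i)! := by
  have hsplit : (range (k + 1)).erase i = range i ∪ Ico (i + 1) (k + 1) := by
    ext j; simp only [mem_erase, Finset.mem_range, Finset.mem_union, Finset.mem_Ico]; omega
  have hdisj : Disjoint (range i) (Ico (i + 1) (k + 1)) :=
    disjoint_left.2 fun j hj hj' => by
      simp only [Finset.mem_range, Finset.mem_Ico] at hj hj'; omega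
  rw [hsplit, prod_union hdisj, prod_Ico_eq_prod_range,
    show k + 1 - (i + 1) = k - i by omega, ← Nat.descFactorial_self,
    ← prod_range_natCast_sub_eq_descFactorial,
    ← prod_range_add_one_eq_factorial, ← card_range i, ← prod_const, card_range,
    ← prod_mul_distrib]
  push_cast
  congr 1
  · exact prod_congr rfl fun j _ => by ring
  · exact prod_congr rfl fun j _ => by ring

lemma sum_div_add_natCast_eq_eval_div_prod {K : Type*} [Field K] [CharZero K] (Q : Polynomial K)
    {k : ℕ} (hQ : Q.degree < k + 1) {z : K} (hz : ∀ i ≤ k, z + i ≠ 0) :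
    ∑ i ∈ range (k + 1), (-1) ^ i * Q.eval (-(i : K)) / (i ! * (k - i)!) / (z + i) =
      Q.eval z / ∏ i ∈ range (k + 1), (z + i) := by
  have hvs : Set.InjOn (fun i : ℕ => -(i : K)) ↑(range (k + 1)) :=
    (neg_injective.comp Nat.cast_injective).injOn
  have hnode : ∀ i ∈ range (k + 1), z ≠ -(i : K) := fun i hi h =>
    hz i (by simpa [Nat.lt_succ_iff] using hi) (by simp [h])
  have hprod : ∏ i ∈ range (k + 1), (z + i) ≠ 0 :=
    prod_ne_zero_iff.2 fun i hi => hz i (by simpa [Nat.lt_succ_iff] using hi)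
  have hQz := congrArg (Polynomial.eval z) (Lagrange.eq_interpolate hvs (by simpa using hQ))
  rw [Lagrange.eval_interpolate_not_at_node _ hnode, Lagrange.eval_nodal] at hQz
  simp only [sub_neg_eq_add] at hQz
  rw [eq_div_iff hprod, hQz, sum_mul, mul_sum]
  refine sum_congr rfl fun i hi => ?_
  have hw : Lagrange.nodalWeight (range (k + 1)) (fun i : ℕ => -(i : K)) i =
      ((-1 : K) ^ i * i ! * (k - i)!)⁻¹ := by
    rw [Lagrange.nodalWeight, prod_inv_distrib,
      ← prod_erase_range_natCast_sub (by simpa [Nat.lt_succ_iff] using hi)]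
    simp only [neg_sub_neg]
  rw [hw, mul_inv, mul_inv, ← inv_pow, inv_neg_one]
  ring

section Jacobi

variable {β : ℝ}

lemma integrableOn_one_sub_rpow {r : ℝ} (hr : -1 < r) :
    IntegrableOn (fun t : ℝ => (1 - t) ^ r) (Ioo (-1) 1) := by
  have h := (intervalIntegral.intervalIntegrable_rpow' (a := 0) (b := 2) hr).comp_sub_left 1
  rw [intervalIntegrable_iff, show Set.uIoc (1 - (0 : ℝ)) (1 - 2) = Set.Ioc (-1) 1 by
    norm_num [Set.uIoc_of_ge]] at h
  exact h.mono_set Ioo_subset_Ioc_self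

lemma integral_one_sub_rpow {r : ℝ} (hr : -1 < r) :
    ∫ t in Ioo (-1 : ℝ) 1, (1 - t) ^ r = 2 ^ (r + 1) / (r + 1) := by
  rw [← integral_Ioc_eq_integral_Ioo, ← intervalIntegral.integral_of_le (by norm_num),
    intervalIntegral.integral_comp_sub_left (fun x => x ^ r), integral_rpow (Or.inl hr)]
  norm_num [zero_rpow (show r + 1 ≠ 0 by linarith)]

lemma half_sub_one_pow_mul_one_sub_rpow {t : ℝ} (ht : t < 1) (q : ℕ) :
    ((t - 1) / 2) ^ q * (1 - t) ^ β = (-1) ^ q / 2 ^ q * (1 - t) ^ (β + q) := by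
  rw [rpow_add (by linarith), rpow_natCast, show (t - 1) / 2 = -1 * (1 - t) / 2 by ring, div_pow,
    mul_pow]
  ring

lemma integrableOn_half_sub_one_pow_mul_one_sub_rpow (hβ : -1 < β) (q : ℕ) :
    IntegrableOn (fun t : ℝ => ((t - 1) / 2) ^ q * (1 - t) ^ β) (Ioo (-1) 1) :=
  IntegrableOn.congr_fun
    ((integrableOn_one_sub_rpow (by linarith [q.cast_nonneg (α := ℝ)])).const_mul _)
    (fun _ ht => (half_sub_one_pow_mul_one_sub_rpow ht.2 q).symm) measurableSet_Ioo

lemma integral_half_sub_one_pow_mul_one_sub_rpow (hβ : -1 < β) (q : ℕ) :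
    ∫ t in Ioo (-1 : ℝ) 1, ((t - 1) / 2) ^ q * (1 - t) ^ β =
      (-1) ^ q * 2 ^ (β + 1) / (β + q + 1) := by
  have hq : 0 < β + q + 1 := by linarith [q.cast_nonneg (α := ℝ)]
  rw [setIntegral_congr_fun measurableSet_Ioo
      (fun _ ht => half_sub_one_pow_mul_one_sub_rpow ht.2 q),
    integral_const_mul, integral_one_sub_rpow (by linarith), add_right_comm,
    rpow_add two_pos, rpow_natCast]
  field_simp

lemma poch_mul_poch_eq_eval_nodal {k i : ℕ} (hi : i ≤ k) :
    poch (β + i + 1) (k - i) * poch (k + β + 0 + 1) i =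
      (-1) ^ k * (Lagrange.nodal (range k) fun l : ℕ => β + 1 + l).eval (-(i : ℝ)) := by
  rw [Lagrange.eval_nodal, ← card_range k, ← prod_const, card_range, ← prod_mul_distrib,
    show k + β + 0 + 1 = β + i + 1 + (k - i : ℕ) by rw [Nat.cast_sub hi]; ring, ← poch_add,
    Nat.sub_add_cancel hi, poch]
  exact prod_congr rfl fun l _ => by ring

lemma integral_jacobiP_mul_pow (hβ : -1 < β) (k p : ℕ) :
    ∫ t in Ioo (-1 : ℝ) 1, jacobiP β 0 k t * ((t - 1) / 2) ^ p * (1 - t) ^ β =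
      (-1) ^ (k + p) * 2 ^ (β + 1) * p.descFactorial k / poch (β + p + 1) (k + 1) := by
  set z : ℝ := β + p + 1
  set Q := Lagrange.nodal (range k) fun l : ℕ => β + 1 + l
  have hQ : Q.degree < k + 1 := by
    rw [Lagrange.degree_nodal, card_range]; exact_mod_cast k.lt_succ_self
  have hz : ∀ i ≤ k, z + i ≠ 0 := fun i _ =>
    (show 0 < z + i by linarith [p.cast_nonneg (α := ℝ), i.cast_nonneg (α := ℝ)]).ne'
  have hterm : ∀ i : ℕ,
      ∫ t in Ioo (-1 : ℝ) 1, ((t - 1) / 2) ^ p * ((t - 1) / 2) ^ i * (1 - t) ^ β =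
        (-1) ^ p * 2 ^ (β + 1) * ((-1) ^ i / (z + i)) := fun i => by
    simp_rw [← pow_add]
    rw [integral_half_sub_one_pow_mul_one_sub_rpow hβ, pow_add, Nat.cast_add,
      show β + (p + i : ℝ) + 1 = z + i by ring]
    ring
  simp only [jacobiP]
  rw [integral_sum_mul_pow_mul (u := fun t => (t - 1) / 2)
    (integrable_pow_mul_pow_mul (integrableOn_half_sub_one_pow_mul_one_sub_rpow hβ) p)]
  simp_rw [hterm]
  calc _ = (-1) ^ p * 2 ^ (β + 1) * (-1) ^ k * ∑ i ∈ range (k + 1),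
        (-1) ^ i * Q.eval (-(i : ℝ)) / (i ! * (k - i)!) / (z + i) := by
        rw [mul_sum]
        refine sum_congr rfl fun i hi => ?_
        rw [poch_mul_poch_eq_eval_nodal (by simpa [Nat.lt_succ_iff] using hi)]
        ring
    _ = _ := by
        rw [sum_div_add_natCast_eq_eval_div_prod Q hQ hz, Lagrange.eval_nodal, poch,
          ← prod_range_natCast_sub_eq_descFactorial,
          show ∏ i ∈ range k, (z - (β + 1 + i)) = ∏ i ∈ range k, ((p : ℝ) - i) from
            prod_congr rfl fun i _ => by ring, pow_add]
        ring

theorem jacobiP_orthogonal (hβ : -1 < β) (k j : ℕ) :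
    ∫ t in Ioo (-1 : ℝ) 1, jacobiP β 0 k t * jacobiP β 0 j t * (1 - t) ^ β =
      if k = j then 2 ^ (β + 1) / (β + 2 * k + 1) else 0 := by
  rw [integral_mul_eq_ite_of_moments (integrableOn_half_sub_one_pow_mul_one_sub_rpow hβ)
    (jacobiP β 0) _ (fun _ _ => rfl) fun m p hpm => by
      rw [integral_jacobiP_mul_pow hβ, Nat.descFactorial_eq_zero_iff_lt.2 hpm]; simp]
  split_ifs
  · have hpos : 0 < β + k + 1 := by linarith [k.cast_nonneg (α := ℝ)]
    have hpoch := (poch_pos hpos k).ne'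
    have hlast : β + k + 1 + k ≠ 0 := by linarith [k.cast_nonneg (α := ℝ)]
    rw [integral_jacobiP_mul_pow hβ, Nat.descFactorial_self, ← two_mul, pow_mul, poch_succ,
      show (k : ℝ) + β + 0 + 1 = β + k + 1 by ring, Nat.sub_self,
      show poch (β + k + 1) 0 = 1 from prod_range_zero _, neg_one_sq, one_pow, Nat.factorial_zero,
      Nat.cast_one, show β + 2 * k + 1 = β + k + 1 + k by ring]
    field_simp
  · rfl

end Jacobi

lemma det_fst_prod_smul_snd_add_smul_fst (a b : ℝ) :
    ((ContinuousLinearMap.fst ℝ ℝ ℝ).prod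
      (a • ContinuousLinearMap.snd ℝ ℝ ℝ + b • ContinuousLinearMap.fst ℝ ℝ ℝ)).det = a := by
  rw [ContinuousLinearMap.det, ← LinearMap.det_toMatrix (Module.Basis.finTwoProd ℝ),
    Matrix.det_fin_two]
  simp [LinearMap.toMatrix_apply]

lemma image_fst_mul_snd_Ioi_prod_Ioo :
    (fun q : ℝ × ℝ => (q.1, q.1 * q.2)) '' (Ioi (0 : ℝ) ×ˢ Ioo (-1 : ℝ) 1) =
      {p : ℝ × ℝ | 0 < p.1 ∧ -p.1 < p.2 ∧ p.2 < p.1} := by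
  ext ⟨x, y⟩
  simp only [Set.mem_image, Set.mem_prod, Set.mem_Ioi, Set.mem_Ioo, Set.mem_ofPred_eq,
    Prod.mk.injEq, Prod.exists]
  constructor
  · rintro ⟨x, t, ⟨hx, ht₁, ht₂⟩, rfl, rfl⟩
    exact ⟨hx, by nlinarith, by nlinarith⟩
  · rintro ⟨hx, hy₁, hy₂⟩
    refine ⟨x, y / x, ⟨hx, ?_, ?_⟩, rfl, by field_simp⟩
    · rwa [lt_div_iff₀ hx, neg_one_mul]
    · rwa [div_lt_one hx]

lemma setIntegral_cone_eq_mul (F : ℝ × ℝ → ℝ) (f g : ℝ → ℝ)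
    (hF : ∀ x t, 0 < x → t ∈ Ioo (-1 : ℝ) 1 → x * F (x, x * t) = f x * g t) :
    ∫ p in {p : ℝ × ℝ | 0 < p.1 ∧ -p.1 < p.2 ∧ p.2 < p.1}, F p =
      (∫ x in Ioi 0, f x) * ∫ t in Ioo (-1) 1, g t := by
  have hs : MeasurableSet (Ioi (0 : ℝ) ×ˢ Ioo (-1 : ℝ) 1) :=
    measurableSet_Ioi.prod measurableSet_Ioo
  have hinj : Set.InjOn (fun q : ℝ × ℝ => (q.1, q.1 * q.2)) (Ioi (0 : ℝ) ×ˢ Ioo (-1 : ℝ) 1) := by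
    rintro ⟨x, t⟩ ⟨hx, -⟩ ⟨x', t'⟩ - h
    simp only [Prod.mk.injEq] at h
    obtain ⟨rfl, h⟩ := h
    exact Prod.ext rfl (mul_left_cancel₀ hx.ne' h)
  rw [← image_fst_mul_snd_Ioi_prod_Ioo, integral_image_eq_integral_abs_det_fderiv_smul volume hs
    (fun q _ => (hasFDerivAt_fst.prodMk (hasFDerivAt_fst.mul hasFDerivAt_snd)).hasFDerivWithinAt)
    hinj F, setIntegral_congr_fun hs fun q ⟨hx, ht⟩ => by
      rw [det_fst_prod_smul_snd_add_smul_fst, abs_of_pos hx, smul_eq_mul, hF _ _ hx ht],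
    Measure.volume_eq_prod, ← Measure.prod_restrict, integral_prod_mul]

lemma mul_ljP_mul_ljP_mul_weight (α β : ℝ) (n k m j : ℕ) {x t : ℝ} (hx : 0 < x) (ht : t < 1) :
    x * (ljP α β n k x (x * t) * ljP α β m j x (x * t) *
        (x ^ (α - β) * exp (-x) * (x - x * t) ^ β)) =
      laguerreL (α + 2 * k + 1) (n - k) x * laguerreL (α + 2 * j + 1) (m - j) x *
          (x ^ (α + k + j + 1) * exp (-x)) *
        (jacobiP β 0 k t * jacobiP β 0 j t * (1 - t) ^ β) := by
  rw [ljP, ljP, mul_div_cancel_left₀ t hx.ne', show x - x * t = x * (1 - t) by ring,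
    mul_rpow hx.le (by linarith), show α + k + j + 1 = α - β + β + k + j + 1 by ring,
    rpow_add hx, rpow_add hx, rpow_add hx, rpow_add hx, rpow_one, rpow_natCast, rpow_natCast]
  ring

theorem lj_orthogonality_general
    (α β : ℝ) (hα : α > -1) (hβ : β > -1) (n k m j : ℕ)
    (hkn : k ≤ n) (hjm : j ≤ m) :
    ∫ p in {p : ℝ × ℝ | 0 < p.1 ∧ -p.1 < p.2 ∧ p.2 < p.1},
        ljP α β n k p.1 p.2 * ljP α β m j p.1 p.2 *
          (p.1 ^ (α - β) * Real.exp (-p.1) * (p.1 - p.2) ^ β)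
      = if n = m ∧ k = j then sconst α β n k else 0 := by
  rw [setIntegral_cone_eq_mul _ _ _ fun x t hx ht =>
      mul_ljP_mul_ljP_mul_weight α β n k m j hx ht.2, jacobiP_orthogonal hβ]
  by_cases hkj : k = j
  · subst hkj
    have ha : -1 < α + 2 * k + 1 := by linarith [k.cast_nonneg (α := ℝ)]
    simp_rw [show α + k + k + 1 = α + 2 * k + 1 by ring, if_true, and_true]
    rw [laguerreL_orthogonal ha]
    by_cases hnm : n = m
    · subst hnm
      rw [if_pos rfl, if_pos rfl, sconst, Nat.cast_sub hkn,
        show α + 2 * k + 1 + (n - k) + 1 = α + n + k + 2 by ring, div_mul_div_comm,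
        mul_comm (Gamma _)]
    · rw [if_neg (by omega), if_neg hnm, zero_mul]
  · rw [if_neg hkj, if_neg fun h => hkj h.2, mul_zero]

/-- Orthogonality of the Laguerre–Jacobi Koornwinder polynomials. -/
theorem lj_orthogonality
    (α β : ℝ) (hα : α > -1) (hβ : β > -1) (n k m j : ℕ)
    (hk : 0 ≤ k) (hkn : k ≤ n) (hj : 0 ≤ j) (hjm : j ≤ m) :
    ∫ p in {p : ℝ × ℝ | 0 < p.1 ∧ -p.1 < p.2 ∧ p.2 < p.1},
        ljP α β n k p.1 p.2 * ljP α β m j p.1 p.2 *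
          (p.1 ^ (α - β) * Real.exp (-p.1) * (p.1 - p.2) ^ β)
      = if n = m ∧ k = j then sconst α β n k else 0 :=
  lj_orthogonality_general α β hα hβ n k m j hkn hjm
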